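/- arXiv:2007.10099 — 3 statements merged into one kernel-verified Lean document; each statement's English description precedes it below -/
import Mathlib

section
/- Let U(t) = σ²(θ*)²·(1 - ησ²)^{2t} + (s²/n)·(1 - (1 - ησ²)^t)² viewed as a function of real t ≥ 0, with 0 < ησ² < 1, θ* ≠ 0, s² > 0. Then U is minimized exactly at the value of t for which (1 - ησ²)^t = (s²/n)/(σ²(θ*)² + s²/n), i.e., the derivative of U vanishes there and U is decreasing before and increasing after this point. -/
open Real Set

/-!
With `x = (1 - ησ²)^t`, `U` is the quadratic `A x² + B (1 - x)²` in `x`, where `A = σ²θ*²` and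
`B = s²/n`; it strictly decreases up to its vertex `B / (A + B) ∈ (0, 1]` and strictly increases
after it. Since `t ↦ x` is strictly decreasing and reaches the vertex at
`t₀ = logb (1 - ησ²) (B / (A + B)) ≥ 0`, the two regimes swap under composition, and the chain
rule turns the zero slope at the vertex into `U'(t₀) = 0`.
-/

def biasVariance (A B x : ℝ) : ℝ := A * x ^ 2 + B * (1 - x) ^ 2

section BiasVariance

variable {A B : ℝ}

lemma biasVariance_sub_biasVariance (A B x y : ℝ) :
    biasVariance A B y - biasVariance A B x = (y - x) * ((A + B) * (x + y) - 2 * B) := by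
  unfold biasVariance; ring

lemma strictMonoOn_biasVariance (h : 0 < A + B) :
    StrictMonoOn (biasVariance A B) (Ici (B / (A + B))) := by
  intro x hx y hy hxy
  have hx' : B ≤ (A + B) * x := by rwa [mem_Ici, div_le_iff₀' h] at hx
  have hy' : B ≤ (A + B) * y := by rwa [mem_Ici, div_le_iff₀' h] at hy
  have hslope : 0 < (A + B) * (x + y) - 2 * B := by nlinarith
  have := biasVariance_sub_biasVariance A B x y
  nlinarith [mul_pos (sub_pos.2 hxy) hslope]

lemma strictAntiOn_biasVariance (h : 0 < A + B) :
    StrictAntiOn (biasVariance A B) (Iic (B / (A + B))) := by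
  intro x hx y hy hxy
  have hx' : (A + B) * x ≤ B := by rwa [mem_Iic, le_div_iff₀' h] at hx
  have hy' : (A + B) * y ≤ B := by rwa [mem_Iic, le_div_iff₀' h] at hy
  have hslope : (A + B) * (x + y) - 2 * B < 0 := by nlinarith
  have := biasVariance_sub_biasVariance A B x y
  nlinarith [mul_neg_of_pos_of_neg (sub_pos.2 hxy) hslope]

lemma hasDerivAt_biasVariance (A B x : ℝ) :
    HasDerivAt (biasVariance A B) (2 * ((A + B) * x - B)) x := by
  have h := ((hasDerivAt_pow 2 x).const_mul A).add
    (((hasDerivAt_pow 2 (1 - x)).comp x ((hasDerivAt_id x).const_sub 1)).const_mul B)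
  exact h.congr_deriv (by norm_num; ring)

lemma hasDerivAt_biasVariance_zero (h : A + B ≠ 0) :
    HasDerivAt (biasVariance A B) 0 (B / (A + B)) := by
  simpa only [mul_div_cancel₀ _ h, sub_self, mul_zero] using
    hasDerivAt_biasVariance A B (B / (A + B))

section Rpow

variable {A B r : ℝ}

lemma strictAntiOn_biasVariance_rpow (hB : 0 < B) (hAB : 0 < A + B) (hr0 : 0 < r)
    (hr1 : r < 1) :
    StrictAntiOn (fun t => biasVariance A B (r ^ t)) (Iic (logb r (B / (A + B)))) := by
  have hinc := strictMonoOn_biasVariance hAB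
  rw [← rpow_logb hr0 hr1.ne (div_pos hB hAB)] at hinc
  have hr := strictAnti_rpow_of_base_lt_one hr0 hr1
  exact hinc.comp_strictAntiOn (hr.strictAntiOn _) fun _ ht => hr.antitone ht

lemma strictMonoOn_biasVariance_rpow (hB : 0 < B) (hAB : 0 < A + B) (hr0 : 0 < r)
    (hr1 : r < 1) :
    StrictMonoOn (fun t => biasVariance A B (r ^ t)) (Ici (logb r (B / (A + B)))) := by
  have hdec := strictAntiOn_biasVariance hAB
  rw [← rpow_logb hr0 hr1.ne (div_pos hB hAB)] at hdec
  have hr := strictAnti_rpow_of_base_lt_one hr0 hr1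
  exact hdec.comp (hr.strictAntiOn _) fun _ ht => hr.antitone ht

lemma hasDerivAt_biasVariance_rpow (hB : 0 < B) (hAB : 0 < A + B) (hr0 : 0 < r)
    (hr1 : r < 1) :
    HasDerivAt (fun t => biasVariance A B (r ^ t)) 0 (logb r (B / (A + B))) := by
  set t0 := logb r (B / (A + B))
  have hcrit := hasDerivAt_biasVariance_zero hAB.ne'
  rw [← rpow_logb hr0 hr1.ne (div_pos hB hAB)] at hcrit
  rw [← zero_mul (r ^ t0 * log r)]
  exact hcrit.comp t0 (hasStrictDerivAt_const_rpow hr0 t0).hasDerivAt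

end Rpow

lemma lt_of_strictAntiOn_Iic_of_strictMonoOn_Ici {α β : Type*} [LinearOrder α] [Preorder β]
    {f : α → β} {a t : α} (hanti : StrictAntiOn f (Iic a)) (hmono : StrictMonoOn f (Ici a))
    (ht : t ≠ a) : f a < f t := by
  rcases ht.lt_or_gt with h | h
  · exact hanti h.le self_mem_Iic h
  · exact hmono self_mem_Ici h.le h

theorem stmt_2_general (σ η θstar s2 n : ℝ) (hη : 0 < η * σ ^ 2)
    (hη1 : η * σ ^ 2 < 1) (hs2 : 0 < s2) (hn : 1 ≤ n)
    (U : ℝ → ℝ)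
    (hU : ∀ t : ℝ, U t =
      σ ^ 2 * θstar ^ 2 * (1 - η * σ ^ 2) ^ (2 * t) +
        (s2 / n) * (1 - (1 - η * σ ^ 2) ^ t) ^ 2) :
    ∃ t0 : ℝ, 0 ≤ t0 ∧
      (1 - η * σ ^ 2) ^ t0 = (s2 / n) / (σ ^ 2 * θstar ^ 2 + s2 / n) ∧
      deriv U t0 = 0 ∧
      StrictAntiOn U (Icc 0 t0) ∧
      StrictMonoOn U (Ici t0) ∧
      ∀ t : ℝ, 0 ≤ t → t ≠ t0 → U t0 < U t := by
  set r := 1 - η * σ ^ 2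
  set A := σ ^ 2 * θstar ^ 2
  set B := s2 / n
  have hr0 : 0 < r := by linarith
  have hr1 : r < 1 := by linarith
  have hB : 0 < B := div_pos hs2 (by linarith)
  have hAB : 0 < A + B := by positivity
  have hUr : U = fun t => biasVariance A B (r ^ t) := funext fun t => by
    rw [hU, mul_comm 2 t, rpow_mul hr0.le, rpow_two]
    rfl
  have hx0 : 0 < B / (A + B) := div_pos hB hAB
  have hx1 : B / (A + B) ≤ 1 :=
    div_le_one_of_le₀ (by linarith [sq_nonneg (σ * θstar)]) hAB.le
  have hanti := strictAntiOn_biasVariance_rpow hB hAB hr0 hr1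
  have hmono := strictMonoOn_biasVariance_rpow hB hAB hr0 hr1
  rw [← hUr] at hanti hmono
  refine ⟨_, logb_nonneg_of_base_lt_one hr0 hr1 hx0 hx1, rpow_logb hr0 hr1.ne hx0,
    hUr ▸ (hasDerivAt_biasVariance_rpow hB hAB hr0 hr1).deriv,
    hanti.mono Icc_subset_Iic_self, hmono,
    fun t _ ht => lt_of_strictAntiOn_Iic_of_strictMonoOn_Ici hanti hmono ht⟩

theorem stmt_2 (σ η θstar s2 n : ℝ) (hσ : 0 < σ) (hη : 0 < η * σ ^ 2)
    (hη1 : η * σ ^ 2 < 1) (hθ : θstar ≠ 0) (hs2 : 0 < s2) (hn : 1 ≤ n)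
    (U : ℝ → ℝ)
    (hU : ∀ t : ℝ, U t =
      σ ^ 2 * θstar ^ 2 * (1 - η * σ ^ 2) ^ (2 * t) +
        (s2 / n) * (1 - (1 - η * σ ^ 2) ^ t) ^ 2) :
    ∃ t0 : ℝ, 0 ≤ t0 ∧
      (1 - η * σ ^ 2) ^ t0 = (s2 / n) / (σ ^ 2 * θstar ^ 2 + s2 / n) ∧
      deriv U t0 = 0 ∧
      StrictAntiOn U (Icc 0 t0) ∧
      StrictMonoOn U (Ici t0) ∧
      ∀ t : ℝ, 0 ≤ t → t ≠ t0 → U t0 < U t :=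
  stmt_2_general σ η θstar s2 n hη hη1 hs2 hn U hU
end BiasVariance
end

section
/- With the stepsize choice η = (1/σ²)·(1 - ((s²/n)/(σ²(θ*)² + s²/n))^{1/k}) for a fixed integer k ≥ 1, the minimum value of U(t) = σ²(θ*)²(1 - ησ²)^{2t} + (s²/n)(1 - (1 - ησ²)^t)² over t is attained at t = k and equals (s²/n)·σ²(θ*)² / (s²/n + σ²(θ*)²), independently of k. -/
/-!
Writing `a = σ²θ*²`, `b = s²/n` and `x = (1 - ησ²)^t`, the risk is the quadratic
`a x² + b (1 - x)² = a b / (a + b) + (a + b) (x - b / (a + b))²`, minimal at `x = b / (a + b)`.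
The stepsize is chosen so that `1 - ησ² = (b / (a + b))^{1/k}`, so this minimiser is reached at `t = k`.
-/

open Real

theorem mul_div_add_le_mul_sq_add_mul_one_sub_sq {a b : ℝ} (hab : 0 < a + b) (x : ℝ) :
    a * b / (a + b) ≤ a * x ^ 2 + b * (1 - x) ^ 2 := by
  rw [div_le_iff₀ hab]
  nlinarith [sq_nonneg ((a + b) * x - b)]

theorem mul_sq_add_mul_one_sub_sq_div_add {a b : ℝ} (hab : a + b ≠ 0) :
    a * (b / (a + b)) ^ 2 + b * (1 - b / (a + b)) ^ 2 = a * b / (a + b) := by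
  field_simp
  ring

theorem stmt_3_general (σ θstar s2 n : ℝ) (k : ℕ) (hσ : 0 < σ)
    (hs2 : 0 < s2) (hn : 1 ≤ n) (hk : 1 ≤ k)
    (η : ℝ)
    (hη : η = (1 / σ ^ 2) *
      (1 - ((s2 / n) / (σ ^ 2 * θstar ^ 2 + s2 / n)) ^ ((1 : ℝ) / k)))
    (U : ℝ → ℝ)
    (hU : ∀ t : ℝ, U t =
      σ ^ 2 * θstar ^ 2 * (1 - η * σ ^ 2) ^ (2 * t) +
        (s2 / n) * (1 - (1 - η * σ ^ 2) ^ t) ^ 2) :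
    (∀ t : ℝ, 0 ≤ t → U (k : ℝ) ≤ U t) ∧
      U (k : ℝ) = (s2 / n) * (σ ^ 2 * θstar ^ 2) / (s2 / n + σ ^ 2 * θstar ^ 2) := by
  set a := σ ^ 2 * θstar ^ 2
  set b := s2 / n
  have hb : 0 < b := div_pos hs2 (by linarith)
  have hab : 0 < a + b := by positivity
  set r := (b / (a + b)) ^ ((1 : ℝ) / k)
  have hbase : 1 - η * σ ^ 2 = r := by
    rw [hη]
    field_simp
    ring
  have hU_quadratic : ∀ t, U t = a * (r ^ t) ^ 2 + b * (1 - r ^ t) ^ 2 := fun t => by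
    rw [hU, hbase, mul_comm 2 t, rpow_mul (by positivity), rpow_two]
  have hrk : r ^ (k : ℝ) = b / (a + b) := by
    unfold r
    rw [rpow_natCast, one_div, rpow_inv_natCast_pow (by positivity) (by omega)]
  have hUk : U k = a * b / (a + b) := by
    rw [hU_quadratic, hrk, mul_sq_add_mul_one_sub_sq_div_add hab.ne']
  refine ⟨fun t _ => ?_, by rw [hUk, mul_comm, add_comm]⟩
  rw [hUk, hU_quadratic]
  exact mul_div_add_le_mul_sq_add_mul_one_sub_sq hab _

theorem stmt_3 (σ θstar s2 n : ℝ) (k : ℕ) (hσ : 0 < σ) (hθ : θstar ≠ 0)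
    (hs2 : 0 < s2) (hn : 1 ≤ n) (hk : 1 ≤ k)
    (η : ℝ)
    (hη : η = (1 / σ ^ 2) *
      (1 - ((s2 / n) / (σ ^ 2 * θstar ^ 2 + s2 / n)) ^ ((1 : ℝ) / k)))
    (U : ℝ → ℝ)
    (hU : ∀ t : ℝ, U t =
      σ ^ 2 * θstar ^ 2 * (1 - η * σ ^ 2) ^ (2 * t) +
        (s2 / n) * (1 - (1 - η * σ ^ 2) ^ t) ^ 2) :
    (∀ t : ℝ, 0 ≤ t → U (k : ℝ) ≤ U t) ∧
      U (k : ℝ) = (s2 / n) * (σ ^ 2 * θstar ^ 2) / (s2 / n + σ ^ 2 * θstar ^ 2) :=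
  stmt_3_general σ θstar s2 n k hσ hs2 hn hk η hη U hU
end

section
/- With the same linear least-squares gradient descent iterates and stepsize η ≤ 1/σ₁², the distance of the t-th iterate from initialization satisfies ‖θ_t - θ₀‖² = Σ_{i=1}^n (⟨uᵢ, r₀⟩ · (1 - (1 - η σᵢ²)^t)/σᵢ)². -/
open Matrix

theorem stmt_9 (n N : ℕ) (hn : 0 < n)
    (σ : Fin n → ℝ) (hσ : ∀ i, 0 < σ i)
    (hord : ∀ i j : Fin n, i ≤ j → σ j ≤ σ i)
    (u : Fin n → Fin n → ℝ) (v : Fin n → Fin N → ℝ)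
    (hu : ∀ i j, ∑ a, u i a * u j a = if i = j then (1 : ℝ) else 0)
    (hv : ∀ i j, ∑ a, v i a * v j a = if i = j then (1 : ℝ) else 0)
    (J : Matrix (Fin n) (Fin N) ℝ)
    (hJ : J = ∑ i, σ i • Matrix.vecMulVec (u i) (v i))
    (θ₀ : Fin N → ℝ) (r₀ : Fin n → ℝ) (η : ℝ) (hη : 0 < η)
    (hη1 : η ≤ 1 / σ ⟨0, hn⟩ ^ 2)
    (θ : ℕ → Fin N → ℝ) (h0 : θ 0 = θ₀)
    (hrec : ∀ t : ℕ, θ (t + 1) =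
      θ t - η • Jᵀ.mulVec (J.mulVec (θ t - θ₀) + r₀)) :
    ∀ t : ℕ, ∑ a, (θ t a - θ₀ a) ^ 2 =
      ∑ i, ((∑ a, u i a * r₀ a) * (1 - (1 - η * σ i ^ 2) ^ t) / σ i) ^ 2 := by
  subst hJ
  set p : Fin n → ℝ := fun i => ∑ a, u i a * r₀ a with hp
  set c : ℕ → Fin n → ℝ := fun t i => p i * ((1 - η * σ i ^ 2) ^ t - 1) / σ i with hc
  set M : Matrix (Fin n) (Fin N) ℝ := ∑ i, σ i • Matrix.vecMulVec (u i) (v i) with hM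
  have hJm : ∀ (x : Fin N → ℝ) (i : Fin n),
      (M.mulVec x) i = ∑ k, σ k * u k i * (∑ b, v k b * x b) := by
    intro x i
    calc (M.mulVec x) i = ∑ b, ∑ k, (σ k * (u k i * v k b)) * x b := by
          simp only [hM, Matrix.mulVec, dotProduct, Matrix.sum_apply,
            Matrix.smul_apply, Matrix.vecMulVec_apply, smul_eq_mul, Finset.sum_mul]
      _ = ∑ k, ∑ b, (σ k * (u k i * v k b)) * x b := Finset.sum_comm
      _ = ∑ k, σ k * u k i * (∑ b, v k b * x b) := by
          refine Finset.sum_congr rfl fun k _ => ?_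
          rw [Finset.mul_sum]
          exact Finset.sum_congr rfl fun b _ => by ring
  have hJTm : ∀ (w : Fin n → ℝ) (a : Fin N),
      (Mᵀ.mulVec w) a = ∑ k, σ k * v k a * (∑ i, u k i * w i) := by
    intro w a
    calc (Mᵀ.mulVec w) a = ∑ i, ∑ k, (σ k * (u k i * v k a)) * w i := by
          simp only [hM, Matrix.mulVec, dotProduct, Matrix.transpose_apply,
            Matrix.sum_apply, Matrix.smul_apply, Matrix.vecMulVec_apply,
            smul_eq_mul, Finset.sum_mul]
      _ = ∑ k, ∑ i, (σ k * (u k i * v k a)) * w i := Finset.sum_comm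
      _ = ∑ k, σ k * v k a * (∑ i, u k i * w i) := by
          refine Finset.sum_congr rfl fun k _ => ?_
          rw [Finset.mul_sum]
          exact Finset.sum_congr rfl fun i _ => by ring
  have hvd : ∀ (d : Fin n → ℝ) (j : Fin n),
      ∑ b, v j b * (∑ m, d m * v m b) = d j := by
    intro d j
    calc ∑ b, v j b * (∑ m, d m * v m b)
        = ∑ b, ∑ m, v j b * (d m * v m b) := by simp_rw [Finset.mul_sum]
      _ = ∑ m, ∑ b, v j b * (d m * v m b) := Finset.sum_comm
      _ = ∑ m, d m * ∑ b, v j b * v m b := by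
          refine Finset.sum_congr rfl fun m _ => ?_
          rw [Finset.mul_sum]
          exact Finset.sum_congr rfl fun b _ => by ring
      _ = d j := by simp [hv]
  have hud : ∀ (d : Fin n → ℝ) (j : Fin n),
      ∑ b, u j b * (∑ m, d m * u m b) = d j := by
    intro d j
    calc ∑ b, u j b * (∑ m, d m * u m b)
        = ∑ b, ∑ m, u j b * (d m * u m b) := by simp_rw [Finset.mul_sum]
      _ = ∑ m, ∑ b, u j b * (d m * u m b) := Finset.sum_comm
      _ = ∑ m, d m * ∑ b, u j b * u m b := by
          refine Finset.sum_congr rfl fun m _ => ?_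
          rw [Finset.mul_sum]
          exact Finset.sum_congr rfl fun b _ => by ring
      _ = d j := by simp [hu]
  have key : ∀ t a, θ t a - θ₀ a = ∑ i, c t i * v i a := by
    intro t
    induction t with
    | zero =>
      intro a
      simp [h0, hc]
    | succ t ih =>
      intro a
      have hδ : (θ t - θ₀) = fun b => ∑ m, c t m * v m b := by
        funext b; exact ih b
      have h2 : ∀ i : Fin n,
          (M.mulVec (θ t - θ₀) + r₀) i = (∑ j, σ j * c t j * u j i) + r₀ i := by
        intro i
        rw [Pi.add_apply, hJm]
        congr 1
        refine Finset.sum_congr rfl fun j _ => ?_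
        have : ∑ b, v j b * (θ t - θ₀) b = c t j := by
          rw [hδ]; exact hvd (c t) j
        rw [this]; ring
      have h3 : ∀ k : Fin n,
          ∑ i, u k i * (M.mulVec (θ t - θ₀) + r₀) i = σ k * c t k + p k := by
        intro k
        have huse := hud (fun j => σ j * c t j) k
        calc ∑ i, u k i * (M.mulVec (θ t - θ₀) + r₀) i
            = (∑ i, u k i * (∑ j, (σ j * c t j) * u j i)) + ∑ i, u k i * r₀ i := by
              rw [← Finset.sum_add_distrib]
              refine Finset.sum_congr rfl fun i _ => ?_
              rw [h2 i]; ring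
          _ = σ k * c t k + p k := by rw [huse]
      have h4 : (Mᵀ.mulVec (M.mulVec (θ t - θ₀) + r₀)) a
          = ∑ k, σ k * v k a * (σ k * c t k + p k) := by
        rw [hJTm]
        refine Finset.sum_congr rfl fun k _ => ?_
        rw [h3 k]
      have expand : θ (t + 1) a - θ₀ a
          = (θ t a - θ₀ a) - η * ∑ k, σ k * v k a * (σ k * c t k + p k) := by
        rw [hrec t]
        simp only [Pi.sub_apply, Pi.smul_apply, smul_eq_mul]
        rw [h4]; ring
      rw [expand, ih a, Finset.mul_sum, ← Finset.sum_sub_distrib]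
      refine Finset.sum_congr rfl fun k _ => ?_
      have hσk := (hσ k).ne'
      simp only [hc]
      field_simp
      ring
  intro t
  have step1 : ∀ a, (θ t a - θ₀ a) ^ 2 = ∑ i, ∑ j, (c t i * v i a) * (c t j * v j a) := by
    intro a
    rw [key t a, sq, Finset.sum_mul_sum]
  rw [Finset.sum_congr rfl fun a _ => step1 a]
  rw [Finset.sum_comm]
  have hdiag : ∀ i : Fin n, (∑ j, ∑ a, (c t i * v i a) * (c t j * v j a)) = (c t i) ^ 2 := by
    intro i
    have inner : ∀ j : Fin n, ∑ a, (c t i * v i a) * (c t j * v j a)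
        = c t i * c t j * (if i = j then (1:ℝ) else 0) := by
      intro j
      rw [← hv i j, Finset.mul_sum]
      exact Finset.sum_congr rfl fun a _ => by ring
    rw [Finset.sum_congr rfl fun j _ => inner j]
    simp [sq]
  calc ∑ i, ∑ a, ∑ j, (c t i * v i a) * (c t j * v j a)
      = ∑ i, ∑ j, ∑ a, (c t i * v i a) * (c t j * v j a) := by
        refine Finset.sum_congr rfl fun i _ => Finset.sum_comm
    _ = ∑ i, (c t i) ^ 2 := Finset.sum_congr rfl fun i _ => hdiag i
    _ = ∑ i, (p i * (1 - (1 - η * σ i ^ 2) ^ t) / σ i) ^ 2 := by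
        refine Finset.sum_congr rfl fun i _ => ?_
        simp only [hc]
        ring
end
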